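/- arXiv:2511.05246 — 3 statements merged into one kernel-verified Lean document; each statement's English description precedes it below -/
import Mathlib

section
/- Under the assumptions v ∈ C¹([0,T]), v(0)=v(T)=0, |v'| ≤ a_max on [0,T], and ∫₀ᵀ v = s₀ > 0, one has T² ≥ 4 s₀ / a_max; equivalently, the time-minimal duration satisfies T ≥ 2√(s₀/a_max). -/
/-!
By the mean value theorem, `|v'| ≤ a_max` together with `v(0) = v(T) = 0` forces
`v t ≤ a_max * min t (T - t)`. Integrating this tent bound gives `s₀ ≤ a_max * T ^ 2 / 4`.
-/

open Set intervalIntegral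

section TentBound

variable {f : ℝ → ℝ} {a b C : ℝ}

theorem le_add_mul_sub_left_of_abs_deriv_le (hf : ContinuousOn f (Icc a b))
    (hdf : DifferentiableOn ℝ f (Ioo a b)) (hC : ∀ x ∈ Ioo a b, |deriv f x| ≤ C)
    {t : ℝ} (ht : t ∈ Icc a b) : f t ≤ f a + C * (t - a) := by
  rw [← interior_Icc] at hdf hC
  have := (convex_Icc a b).image_sub_le_mul_sub_of_deriv_le hf hdf
    (fun x hx => (le_abs_self _).trans (hC x hx)) a (left_mem_Icc.2 (ht.1.trans ht.2)) t ht ht.1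
  linarith

theorem le_add_mul_sub_right_of_abs_deriv_le (hf : ContinuousOn f (Icc a b))
    (hdf : DifferentiableOn ℝ f (Ioo a b)) (hC : ∀ x ∈ Ioo a b, |deriv f x| ≤ C)
    {t : ℝ} (ht : t ∈ Icc a b) : f t ≤ f b + C * (b - t) := by
  rw [← interior_Icc] at hdf hC
  have := (convex_Icc a b).mul_sub_le_image_sub_of_le_deriv hf hdf
    (fun x hx => neg_le_of_abs_le (hC x hx)) t ht b (right_mem_Icc.2 (ht.1.trans ht.2)) ht.2
  linarith

/-- The tent `t ↦ C * min (t - a) (b - t)` has area `C * (b - a) ^ 2 / 4`. -/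
theorem integral_le_of_le_tent (hab : a ≤ b)
    (hf : IntervalIntegrable f MeasureTheory.volume a b)
    (hleft : ∀ t ∈ Icc a b, f t ≤ C * (t - a)) (hright : ∀ t ∈ Icc a b, f t ≤ C * (b - t)) :
    ∫ t in a..b, f t ≤ C * (b - a) ^ 2 / 4 := by
  set m := (a + b) / 2 with hm
  have ham : a ≤ m := by linarith
  have hmb : m ≤ b := by linarith
  have hfam : IntervalIntegrable f MeasureTheory.volume a m :=
    hf.mono_set (by rw [uIcc_of_le hab, uIcc_of_le ham]; exact Icc_subset_Icc le_rfl hmb)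
  have hfmb : IntervalIntegrable f MeasureTheory.volume m b :=
    hf.mono_set (by rw [uIcc_of_le hab, uIcc_of_le hmb]; exact Icc_subset_Icc ham le_rfl)
  have h_left_half : ∫ t in a..m, f t ≤ ∫ t in a..m, C * (t - a) :=
    integral_mono_on ham hfam
      ((by fun_prop : Continuous fun t => C * (t - a)).intervalIntegrable _ _)
      fun t ht => hleft t ⟨ht.1, ht.2.trans hmb⟩
  have h_right_half : ∫ t in m..b, f t ≤ ∫ t in m..b, C * (b - t) :=
    integral_mono_on hmb hfmb
      ((by fun_prop : Continuous fun t => C * (b - t)).intervalIntegrable _ _)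
      fun t ht => hright t ⟨ham.trans ht.1, ht.2⟩
  simp only [integral_const_mul, integral_comp_sub_right (fun x => x),
    integral_comp_sub_left (fun x => x), integral_id, hm] at h_left_half h_right_half
  rw [← integral_add_adjacent_intervals hfam hfmb]
  linarith

theorem integral_le_of_abs_deriv_le (hab : a ≤ b) (hf : ContinuousOn f (Icc a b))
    (hdf : DifferentiableOn ℝ f (Ioo a b)) (hC : ∀ x ∈ Ioo a b, |deriv f x| ≤ C)
    (ha : f a = 0) (hb : f b = 0) :
    ∫ t in a..b, f t ≤ C * (b - a) ^ 2 / 4 :=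
  integral_le_of_le_tent hab (hf.intervalIntegrable_of_Icc hab)
    (fun t ht => by simpa [ha] using le_add_mul_sub_left_of_abs_deriv_le hf hdf hC ht)
    (fun t ht => by simpa [hb] using le_add_mul_sub_right_of_abs_deriv_le hf hdf hC ht)

end TentBound

theorem stmt_2_general (T s₀ amax : ℝ) (v : ℝ → ℝ)
    (hT : 0 ≤ T)
    (hv : ContDiffOn ℝ 1 v (Set.Icc 0 T))
    (hv0 : v 0 = 0) (hvT : v T = 0)
    (hamax : 0 < amax)
    (hba : ∀ t ∈ Set.Icc 0 T, |deriv v t| ≤ amax)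
    (hs : ∫ t in (0:ℝ)..T, v t = s₀) :
    T ^ 2 ≥ 4 * s₀ / amax := by
  have hbound := integral_le_of_abs_deriv_le hT hv.continuousOn
    ((hv.differentiableOn one_ne_zero).mono Ioo_subset_Icc_self)
    (fun t ht => hba t (Ioo_subset_Icc_self ht)) hv0 hvT
  rw [hs, sub_zero] at hbound
  rw [ge_iff_le, div_le_iff₀ hamax]
  linarith

theorem stmt_2 (T s₀ amax : ℝ) (v : ℝ → ℝ)
    (hT : 0 ≤ T)
    (hv : ContDiffOn ℝ 1 v (Set.Icc 0 T))
    (hv0 : v 0 = 0) (hvT : v T = 0)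
    (hamax : 0 < amax)
    (hba : ∀ t ∈ Set.Icc 0 T, |deriv v t| ≤ amax)
    (hs : ∫ t in (0:ℝ)..T, v t = s₀) (hs0 : 0 < s₀) :
    T ^ 2 ≥ 4 * s₀ / amax :=
  stmt_2_general T s₀ amax v hT hv hv0 hvT hamax hba hs
end

section
/- Suppose v ∈ C²([0,T]) with v(0)=v(T)=v'(0)=v'(T)=0, |v''| ≤ j_max on [0,T], and ∫₀ᵀ v = s₀ > 0. Then T³ ≥ 8 s₀ / j_max. -/
/-!
Since `v'' ≥ -j`, the function `j t (T - t) / 2 - v t` is concave on `[0, T]`; it vanishes at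
both ends, so it is nonnegative there. Integrating gives `s₀ ≤ j T³ / 12`.
-/

open Set intervalIntegral

lemma ContDiffOn.hasDerivAt_of_mem_Ioo {f : ℝ → ℝ} {a b t : ℝ}
    (hf : ContDiffOn ℝ 2 f (Icc a b)) (ht : t ∈ Ioo a b) :
    HasDerivAt f (deriv f t) t ∧ HasDerivAt (deriv f) (deriv (deriv f) t) t := by
  have h := (contDiffOn_succ_iff_deriv_of_isOpen (n := 1) isOpen_Ioo).1
    (hf.mono Ioo_subset_Icc_self)
  have hnhds := isOpen_Ioo.mem_nhds ht
  exact ⟨(h.1.differentiableAt hnhds).hasDerivAt,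
    ((h.2.2.differentiableOn one_ne_zero).differentiableAt hnhds).hasDerivAt⟩

section DerivTwoLowerBound

variable {f : ℝ → ℝ} {a b c : ℝ}

lemma concaveOn_quadratic_sub_of_neg_le_deriv2 (hf : ContDiffOn ℝ 2 f (Icc a b))
    (hc : ∀ t ∈ Ioo a b, -c ≤ deriv (deriv f) t) :
    ConcaveOn ℝ (Icc a b) (fun t => c * ((t - a) * (b - t)) / 2 - f t) := by
  refine concaveOn_of_hasDerivWithinAt2_nonpos (convex_Icc a b)
    (f' := fun t => c * (a + b - 2 * t) / 2 - deriv f t)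
    (f'' := fun t => -c - deriv (deriv f) t)
    ((by fun_prop : Continuous fun t => c * ((t - a) * (b - t)) / 2).continuousOn.sub
      hf.continuousOn) ?_ ?_ ?_ <;> rw [interior_Icc] <;> intro t ht
  · have hq := ((((hasDerivAt_id t).sub_const a).mul ((hasDerivAt_id t).const_sub b)).const_mul
      c).div_const 2
    refine ((hq.sub (hf.hasDerivAt_of_mem_Ioo ht).1).congr_deriv ?_).hasDerivWithinAt
    simp only [id]
    ring
  · have hq := (((hasDerivAt_id t).const_mul 2).const_sub (a + b) |>.const_mul c).div_const 2
    refine ((hq.sub (hf.hasDerivAt_of_mem_Ioo ht).2).congr_deriv ?_).hasDerivWithinAt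
    ring
  · linarith [hc t ht]

lemma le_quadratic_of_neg_le_deriv2 (hf : ContDiffOn ℝ 2 f (Icc a b)) (ha : f a = 0)
    (hb : f b = 0) (hc : ∀ t ∈ Ioo a b, -c ≤ deriv (deriv f) t) {t : ℝ} (ht : t ∈ Icc a b) :
    f t ≤ c * ((t - a) * (b - t)) / 2 := by
  have hab : a ≤ b := ht.1.trans ht.2
  have h := (concaveOn_quadratic_sub_of_neg_le_deriv2 hf hc).min_le_of_mem_Icc
    (left_mem_Icc.2 hab) (right_mem_Icc.2 hab) ht
  simp only [sub_self, zero_mul, mul_zero, zero_div, ha, hb, min_self] at h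
  linarith

lemma integral_sub_mul_sub (a b : ℝ) :
    ∫ t in a..b, (t - a) * (b - t) = (b - a) ^ 3 / 6 := by
  have hF : ∀ t ∈ uIcc a b, HasDerivAt (fun s => (s - a) ^ 2 * (3 * b - a - 2 * s) / 6)
      ((t - a) * (b - t)) t := by
    intro t _
    refine ((((hasDerivAt_id t).sub_const a).pow 2).mul
      (((hasDerivAt_id t).const_mul 2).const_sub (3 * b - a)) |>.div_const 6).congr_deriv ?_
    simp only [id, Pi.pow_apply]
    ring
  rw [integral_eq_sub_of_hasDerivAt hF ((by fun_prop : Continuous _).intervalIntegrable a b)]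
  ring

lemma integral_le_of_neg_le_deriv2 (hab : a ≤ b) (hf : ContDiffOn ℝ 2 f (Icc a b))
    (ha : f a = 0) (hb : f b = 0) (hc : ∀ t ∈ Ioo a b, -c ≤ deriv (deriv f) t) :
    ∫ t in a..b, f t ≤ c * (b - a) ^ 3 / 12 := calc
  ∫ t in a..b, f t ≤ ∫ t in a..b, c * ((t - a) * (b - t)) / 2 :=
    integral_mono_on hab (hf.continuousOn.intervalIntegrable_of_Icc hab)
      ((by fun_prop : Continuous _).intervalIntegrable a b)
      fun t ht => le_quadratic_of_neg_le_deriv2 hf ha hb hc ht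
  _ = c * (b - a) ^ 3 / 12 := by
    rw [integral_div, integral_const_mul, integral_sub_mul_sub]
    ring

end DerivTwoLowerBound

theorem stmt_4_general (T s₀ jmax : ℝ) (v : ℝ → ℝ)
    (hT : 0 ≤ T)
    (hv : ContDiffOn ℝ 2 v (Set.Icc 0 T))
    (hv0 : v 0 = 0) (hvT : v T = 0)
    (hjmax : 0 < jmax)
    (hbj : ∀ t ∈ Set.Icc 0 T, |deriv (deriv v) t| ≤ jmax)
    (hs : ∫ t in (0:ℝ)..T, v t = s₀) (hs0 : 0 < s₀) :
    T ^ 3 ≥ 8 * s₀ / jmax := by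
  have hbound := integral_le_of_neg_le_deriv2 hT hv hv0 hvT
    fun t ht => (abs_le.1 (hbj t (Ioo_subset_Icc_self ht))).1
  rw [hs, sub_zero] at hbound
  rw [ge_iff_le, div_le_iff₀ hjmax]
  nlinarith

theorem stmt_4 (T s₀ jmax : ℝ) (v : ℝ → ℝ)
    (hT : 0 ≤ T)
    (hv : ContDiffOn ℝ 2 v (Set.Icc 0 T))
    (hv0 : v 0 = 0) (hvT : v T = 0)
    (hdv0 : deriv v 0 = 0) (hdvT : deriv v T = 0)
    (hjmax : 0 < jmax)
    (hbj : ∀ t ∈ Set.Icc 0 T, |deriv (deriv v) t| ≤ jmax)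
    (hs : ∫ t in (0:ℝ)..T, v t = s₀) (hs0 : 0 < s₀) :
    T ^ 3 ≥ 8 * s₀ / jmax :=
  stmt_4_general T s₀ jmax v hT hv hv0 hvT hjmax hbj hs hs0
end

section
/- The trapezoidal profile duration T(s₀) = s₀/v_max + v_max/a_max is the minimal time: any v ∈ C¹-piecewise function on [0,T'] with v(0)=v(T')=0, 0 ≤ v ≤ v_max, |v'| ≤ a_max a.e., and ∫₀^{T'} v = s₀ (with s₀ ≥ v_max²/a_max) satisfies T' ≥ s₀/v_max + v_max/a_max. -/
open Set intervalIntegral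

lemma lip_aux (f : ℝ → ℝ) (C : ℝ) (s : Finset ℝ) :
    ∀ a b : ℝ, a ≤ b → ContinuousOn f (Set.Icc a b) →
    (∀ x ∈ Set.Ioo a b \ (s : Set ℝ), DifferentiableAt ℝ f x ∧ |deriv f x| ≤ C) →
    |f b - f a| ≤ C * (b - a) := by
  induction s using Finset.induction_on with
  | empty =>
    intro a b hab hcont hd
    rcases eq_or_lt_of_le hab with rfl | hab'
    · simp
    · have hdiff : DifferentiableOn ℝ f (Set.Ioo a b) := fun x hx =>
        ((hd x (by simpa using hx)).1).differentiableWithinAt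
      obtain ⟨c, hc, hceq⟩ := exists_deriv_eq_slope f hab' hcont hdiff
      have h1 := (hd c (by simpa using hc)).2
      rw [hceq, abs_div, abs_of_pos (sub_pos.2 hab'), div_le_iff₀ (sub_pos.2 hab')] at h1
      linarith [h1]
  | @insert p s' hp ih =>
    intro a b hab hcont hd
    by_cases hmem : p ∈ Set.Ioo a b
    · have h1 := ih a p hmem.1.le (hcont.mono (Set.Icc_subset_Icc le_rfl hmem.2.le))
        (fun x hx => hd x ⟨⟨hx.1.1, hx.1.2.trans hmem.2⟩, by
          intro hxm
          simp only [Finset.coe_insert, Set.mem_insert_iff] at hxm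
          rcases hxm with rfl | h
          · exact absurd hx.1.2 (lt_irrefl _)
          · exact hx.2 h⟩)
      have h2 := ih p b hmem.2.le (hcont.mono (Set.Icc_subset_Icc hmem.1.le le_rfl))
        (fun x hx => hd x ⟨⟨hmem.1.trans hx.1.1, hx.1.2⟩, by
          intro hxm
          simp only [Finset.coe_insert, Set.mem_insert_iff] at hxm
          rcases hxm with rfl | h
          · exact absurd hx.1.1 (lt_irrefl _)
          · exact hx.2 h⟩)
      calc |f b - f a| ≤ |f b - f p| + |f p - f a| := abs_sub_le _ _ _
        _ ≤ C * (b - p) + C * (p - a) := add_le_add h2 h1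
        _ = C * (b - a) := by ring
    · refine ih a b hab hcont (fun x hx => hd x ⟨hx.1, ?_⟩)
      intro hxm
      simp only [Finset.coe_insert, Set.mem_insert_iff] at hxm
      rcases hxm with rfl | h
      · exact hmem hx.1
      · exact hx.2 h

theorem stmt_6 (s₀ vmax amax T' : ℝ) (v : ℝ → ℝ)
    (hvmax : 0 < vmax) (hamax : 0 < amax) (hT' : 0 ≤ T')
    (hlong : s₀ ≥ vmax ^ 2 / amax)
    (hc : ContinuousOn v (Set.Icc 0 T'))
    (hv0 : v 0 = 0) (hvT : v T' = 0)
    (hvb : ∀ t ∈ Set.Icc 0 T', 0 ≤ v t ∧ v t ≤ vmax)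
    (hpw : ∃ s : Finset ℝ, ∀ t ∈ Set.Icc 0 T' \ (s : Set ℝ),
      DifferentiableAt ℝ v t ∧ |deriv v t| ≤ amax)
    (hs : ∫ t in (0:ℝ)..T', v t = s₀) :
    T' ≥ s₀ / vmax + vmax / amax := by
  obtain ⟨S, hS⟩ := hpw
  -- pointwise bounds
  have hub1 : ∀ t ∈ Set.Icc 0 T', v t ≤ amax * t := by
    intro t ht
    have := lip_aux v amax S 0 t ht.1 (hc.mono (Set.Icc_subset_Icc le_rfl ht.2))
      (fun x hx => hS x ⟨⟨hx.1.1.le, hx.1.2.le.trans ht.2⟩, hx.2⟩)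
    rw [hv0, sub_zero, sub_zero] at this
    exact (le_abs_self _).trans this
  have hub2 : ∀ t ∈ Set.Icc 0 T', v t ≤ amax * (T' - t) := by
    intro t ht
    have := lip_aux v amax S t T' ht.2 (hc.mono (Set.Icc_subset_Icc ht.1 le_rfl))
      (fun x hx => hS x ⟨⟨ht.1.trans hx.1.1.le, hx.1.2.le⟩, hx.2⟩)
    rw [hvT] at this
    have h2 : v t ≤ |0 - v t| := by
      rw [zero_sub, abs_neg]
      exact le_abs_self _
    linarith [h2.trans this]
  have hvint : ∀ a b : ℝ, 0 ≤ a → a ≤ b → b ≤ T' → IntervalIntegrable v MeasureTheory.volume a b :=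
    fun a b h1 h2 h3 => (hc.mono (Set.Icc_subset_Icc h1 h3)).intervalIntegrable_of_Icc h2
  have hi_lin : ∀ a b : ℝ, ∫ t in a..b, amax * t = amax * (b ^ 2 - a ^ 2) / 2 := by
    intro a b
    rw [intervalIntegral.integral_const_mul, integral_id]
    ring
  have hi_lin2 : ∀ a b : ℝ, ∫ t in a..b, amax * (T' - t)
      = amax * (T' * (b - a) - (b ^ 2 - a ^ 2) / 2) := by
    intro a b
    simp only [mul_sub]
    rw [intervalIntegral.integral_sub (Continuous.intervalIntegrable (by fun_prop) _ _)
      (Continuous.intervalIntegrable (by fun_prop) _ _),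
      intervalIntegral.integral_const, intervalIntegral.integral_const_mul, integral_id]
    simp [smul_eq_mul]
    ring
  set c : ℝ := vmax / amax with hcdef
  have hc0 : 0 < c := div_pos hvmax hamax
  by_cases hcase : 2 * c ≤ T'
  · -- trapezoid bound
    have h01 : (0:ℝ) ≤ c := hc0.le
    have hcT : c ≤ T' - c := by linarith
    have hTc : T' - c ≤ T' := by linarith
    have i1 := hvint 0 c le_rfl h01 (by linarith)
    have i2 := hvint c (T' - c) h01 hcT hTc
    have i3 := hvint (T' - c) T' (by linarith) hTc le_rfl
    have i23 := hvint c T' h01 (by linarith) le_rfl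
    have e2 : (∫ t in c..(T'-c), v t) + (∫ t in (T'-c)..T', v t) = ∫ t in c..T', v t :=
      intervalIntegral.integral_add_adjacent_intervals i2 i3
    have e1 : (∫ t in (0:ℝ)..c, v t) + (∫ t in c..T', v t) = ∫ t in (0:ℝ)..T', v t :=
      intervalIntegral.integral_add_adjacent_intervals i1 i23
    have b1 : (∫ t in (0:ℝ)..c, v t) ≤ amax * (c ^ 2 - 0 ^ 2) / 2 := by
      rw [← hi_lin 0 c]
      exact intervalIntegral.integral_mono_on h01 i1 (Continuous.intervalIntegrable (by fun_prop) _ _)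
        (fun t ht => hub1 t ⟨ht.1, ht.2.trans (by linarith)⟩)
    have b2 : (∫ t in c..(T'-c), v t) ≤ vmax * (T' - c - c) := by
      have : (∫ t in c..(T'-c), (vmax : ℝ)) = vmax * (T' - c - c) := by
        rw [intervalIntegral.integral_const]; simp [smul_eq_mul]; ring
      rw [← this]
      exact intervalIntegral.integral_mono_on hcT i2 (Continuous.intervalIntegrable (by fun_prop) _ _)
        (fun t ht => (hvb t ⟨h01.trans ht.1, ht.2.trans hTc⟩).2)
    have b3 : (∫ t in (T'-c)..T', v t)
        ≤ amax * (T' * (T' - (T' - c)) - (T' ^ 2 - (T' - c) ^ 2) / 2) := by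
      rw [← hi_lin2 (T' - c) T']
      exact intervalIntegral.integral_mono_on hTc i3 (Continuous.intervalIntegrable (by fun_prop) _ _)
        (fun t ht => hub2 t ⟨(by linarith : (0:ℝ) ≤ T' - c).trans ht.1, ht.2⟩)
    have hsum : s₀ ≤ vmax * T' - vmax ^ 2 / amax := by
      have hsum3 : amax * (c ^ 2 - 0 ^ 2) / 2 + vmax * (T' - c - c)
          + amax * (T' * (T' - (T' - c)) - (T' ^ 2 - (T' - c) ^ 2) / 2)
          = amax * c ^ 2 + vmax * T' - 2 * (vmax * c) := by ring
      have h4 : amax * c ^ 2 = vmax ^ 2 / amax := by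
        rw [hcdef]; field_simp
      have h5 : vmax * c = vmax ^ 2 / amax := by
        rw [hcdef]; field_simp
      linarith [b1, b2, b3, e1, e2, hs, hsum3, h4, h5]
    rw [ge_iff_le]
    have h1 : s₀ / vmax ≤ T' - vmax / amax := by
      rw [div_le_iff₀ hvmax]
      have : (T' - vmax / amax) * vmax = vmax * T' - vmax ^ 2 / amax := by
        field_simp
      linarith [hsum, this.ge]
    linarith
  · -- short case: contradiction
    exfalso
    push_neg at hcase
    set m : ℝ := T' / 2 with hm
    have hm0 : 0 ≤ m := by positivity
    have hmT : m ≤ T' := by simp [hm]; linarith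
    have i1 := hvint 0 m le_rfl hm0 hmT
    have i2 := hvint m T' hm0 hmT le_rfl
    have e1 : (∫ t in (0:ℝ)..m, v t) + (∫ t in m..T', v t) = ∫ t in (0:ℝ)..T', v t :=
      intervalIntegral.integral_add_adjacent_intervals i1 i2
    have b1 : (∫ t in (0:ℝ)..m, v t) ≤ amax * (m ^ 2 - 0 ^ 2) / 2 := by
      rw [← hi_lin 0 m]
      exact intervalIntegral.integral_mono_on hm0 i1 (Continuous.intervalIntegrable (by fun_prop) _ _)
        (fun t ht => hub1 t ⟨ht.1, ht.2.trans hmT⟩)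
    have b2 : (∫ t in m..T', v t)
        ≤ amax * (T' * (T' - m) - (T' ^ 2 - m ^ 2) / 2) := by
      rw [← hi_lin2 m T']
      exact intervalIntegral.integral_mono_on hmT i2 (Continuous.intervalIntegrable (by fun_prop) _ _)
        (fun t ht => hub2 t ⟨hm0.trans ht.1, ht.2⟩)
    have hsq : s₀ ≤ amax * T' ^ 2 / 4 := by
      have hsum2 : amax * (m ^ 2 - 0 ^ 2) / 2 + amax * (T' * (T' - m) - (T' ^ 2 - m ^ 2) / 2)
          = amax * T' ^ 2 / 4 := by rw [hm]; ring
      linarith [b1, b2, e1, hs, hsum2]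
    have hlt : amax * T' ^ 2 / 4 < vmax ^ 2 / amax := by
      have h1 : T' ^ 2 < (2 * c) ^ 2 := by nlinarith [hc0, hT', hcase]
      have h2 : amax * (2 * c) ^ 2 / 4 = vmax ^ 2 / amax := by
        rw [hcdef]; field_simp; ring
      nlinarith [h1, hamax]
    linarith [hlong]
end
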